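/- arXiv:2001.01153 — 3 statements merged into one kernel-verified Lean document; each statement's English description precedes it below -/
import Mathlib

section
/- Let A, R, P, S be d×d real matrices with R and P symmetric, and suppose S solves the Lyapunov equation (A - RP)S + S(A - RP)^T = R, and P solves the Riccati equation PA + A^T P - PRP + Q = 0 for a symmetric matrix Q. Let B = A - RP and let T be the 2d×2d block matrix [[I, S],[P, PS + I]]. Then T is invertible and T^{-1} · [[A, -R],[-Q, -A^T]] · T = [[B, 0],[0, -B^T]]. -/
/-!
Factor `T = [[I, 0], [P, I]] * [[I, S], [0, I]]`. Conjugating the Hamiltonian matrix by the lower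
factor leaves the Riccati residual in the lower-left block, and conjugating the resulting upper
block-triangular matrix by the upper factor leaves the Lyapunov residual `B S + S Bᵀ - R` in the
upper-right block; both vanish. Equivalently, `H T = T diag(B, -Bᵀ)`, which is checked block by
block, and `det T = det (P S + I - P S) = 1`.
-/

open Matrix

namespace Matrix

variable {m n α : Type*}

theorem det_fromBlocks_one_shear [Fintype m] [Fintype n] [DecidableEq m] [DecidableEq n]
    [CommRing α] (S : Matrix m n α) (P : Matrix n m α) :
    (fromBlocks 1 S P (P * S + 1)).det = 1 := by
  rw [det_fromBlocks_one₁₁, add_sub_cancel_left, det_one]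

theorem isUnit_fromBlocks_one_shear [Fintype m] [Fintype n] [DecidableEq m] [DecidableEq n]
    [CommRing α] (S : Matrix m n α) (P : Matrix n m α) :
    IsUnit (fromBlocks 1 S P (P * S + 1)) := by
  rw [isUnit_iff_isUnit_det, det_fromBlocks_one_shear]
  exact isUnit_one

theorem inv_mul_mul_eq_of_mul_eq_mul [Fintype n] [DecidableEq n] [CommRing α]
    {T H D : Matrix n n α} (hT : IsUnit T) (h : H * T = T * D) : T⁻¹ * H * T = D := by
  rw [Matrix.mul_assoc, h, ← Matrix.mul_assoc, nonsing_inv_mul _ ((isUnit_iff_isUnit_det T).1 hT),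
    Matrix.one_mul]

/-- `A'` and `B'` stand for `Aᵀ` and `Bᵀ`. -/
theorem hamiltonian_mul_shear_eq [Fintype n] [DecidableEq n] [Ring α]
    {A A' R P Q S B B' : Matrix n n α} (hB : B = A - R * P) (hB' : B' = A' - P * R)
    (hRic : P * A + A' * P - P * R * P + Q = 0) (hLyap : B * S + S * B' = R) :
    fromBlocks A (-R) (-Q) (-A') * fromBlocks 1 S P (P * S + 1) =
      fromBlocks 1 S P (P * S + 1) * fromBlocks B 0 0 (-B') := by
  subst hB hB'
  have hQ : Q = P * R * P - P * A - A' * P := by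
    rw [← sub_eq_zero, ← hRic]; noncomm_ring
  subst hQ
  rw [fromBlocks_multiply, fromBlocks_multiply, fromBlocks_inj]
  refine ⟨by noncomm_ring, ?_, by noncomm_ring, ?_⟩
  · calc A * S + -R * (P * S + 1)
        = ((A - R * P) * S + S * (A' - P * R) - R) + S * -(A' - P * R) := by noncomm_ring
      _ = 1 * 0 + S * -(A' - P * R) := by rw [hLyap, sub_self]; noncomm_ring
  · calc -(P * R * P - P * A - A' * P) * S + -A' * (P * S + 1)
        = P * ((A - R * P) * S + S * (A' - P * R) - R) + (P * S + 1) * -(A' - P * R) := by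
          noncomm_ring
      _ = P * 0 + (P * S + 1) * -(A' - P * R) := by rw [hLyap, sub_self]

end Matrix

theorem lyapunov_riccati_block_diagonalization_general
    (d : ℕ) (A R P Q S : Matrix (Fin d) (Fin d) ℝ)
    (hR : Rᵀ = R) (hP : Pᵀ = P)
    (hLyap : (A - R * P) * S + S * (A - R * P)ᵀ = R)
    (hRic : P * A + Aᵀ * P - P * R * P + Q = 0)
    (B : Matrix (Fin d) (Fin d) ℝ) (hB : B = A - R * P)
    (T : Matrix (Fin d ⊕ Fin d) (Fin d ⊕ Fin d) ℝ)
    (hT : T = Matrix.fromBlocks 1 S P (P * S + 1)) :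
    IsUnit T ∧
      T⁻¹ * Matrix.fromBlocks A (-R) (-Q) (-Aᵀ) * T =
        Matrix.fromBlocks B 0 0 (-Bᵀ) := by
  have hBt : Bᵀ = Aᵀ - P * R := by rw [hB, transpose_sub, transpose_mul, hP, hR]
  have hUnit : IsUnit T := hT ▸ isUnit_fromBlocks_one_shear S P
  refine ⟨hUnit, inv_mul_mul_eq_of_mul_eq_mul hUnit ?_⟩
  rw [hT]
  exact hamiltonian_mul_shear_eq hB hBt hRic (by rw [hB]; exact hLyap)

theorem lyapunov_riccati_block_diagonalization
    (d : ℕ) (A R P Q S : Matrix (Fin d) (Fin d) ℝ)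
    (hR : Rᵀ = R) (hP : Pᵀ = P) (hQ : Qᵀ = Q)
    (hLyap : (A - R * P) * S + S * (A - R * P)ᵀ = R)
    (hRic : P * A + Aᵀ * P - P * R * P + Q = 0)
    (B : Matrix (Fin d) (Fin d) ℝ) (hB : B = A - R * P)
    (T : Matrix (Fin d ⊕ Fin d) (Fin d ⊕ Fin d) ℝ)
    (hT : T = Matrix.fromBlocks 1 S P (P * S + 1)) :
    IsUnit T ∧
      T⁻¹ * Matrix.fromBlocks A (-R) (-Q) (-Aᵀ) * T =
        Matrix.fromBlocks B 0 0 (-Bᵀ) :=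
  lyapunov_riccati_block_diagonalization_general d A R P Q S hR hP hLyap hRic B hB T hT
end

section
/- Let a, b, M > 0, ξ > 0 with ξ ≤ 3b/(16a²M), c₀ = aM/(3b), and let ᾱ, β̄ be as in the fixed point solution (with g = 3b/(32aM) - (a/4)ξ): ᾱ = (3a²ξ²/16)/(g + √(g² - a²ξ²/16)) + aξ and β̄ = (a²ξ²/16)/(g + √(g² - a²ξ²/16)). Define α_0 = aξ, β_0 = 0, α_{k+1} = 3c₀(α_k + β_k)² + aξ, β_{k+1} = c₀(α_k + β_k)². Then α_k ≤ ᾱ and β_k ≤ β̄ for all k ≥ 0. -/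
/-!
Since `α₀ = 3β₀ + aξ` and `α_{k+1} = 3β_{k+1} + aξ`, the system collapses to the scalar iteration
`β_{k+1} = c₀ (4β_k + aξ)²`, whose map is monotone on `[0, ∞)`. With `1/c₀ = 32g + 8aξ`, its
fixed points are the roots of `x² - 2gx + a²ξ²/16`, and `β̄` is the smaller one written in
rationalized form; `β₀ = 0 ≤ β̄` then propagates to `β_k ≤ β̄` by induction.
-/

/-- The smaller root `g - √(g² - q)` of `x² - 2gx + q`, in the form that avoids cancellation. -/
noncomputable def smallRoot (g q : ℝ) : ℝ := q / (g + √(g ^ 2 - q))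

lemma smallRoot_eq_sub_sqrt {g q : ℝ} (hg : 0 < g) (hqg : q ≤ g ^ 2) :
    smallRoot g q = g - √(g ^ 2 - q) := by
  have hs : √(g ^ 2 - q) ^ 2 = g ^ 2 - q := Real.sq_sqrt (by linarith)
  have hpos : 0 < g + √(g ^ 2 - q) := by positivity
  rw [smallRoot, div_eq_iff hpos.ne']
  linear_combination hs

lemma smallRoot_sq_sub_two_mul_add {g q : ℝ} (hg : 0 < g) (hqg : q ≤ g ^ 2) :
    smallRoot g q ^ 2 - 2 * g * smallRoot g q + q = 0 := by
  have hs : √(g ^ 2 - q) ^ 2 = g ^ 2 - q := Real.sq_sqrt (by linarith)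
  rw [smallRoot_eq_sub_sqrt hg hqg]
  linear_combination hs

lemma mul_four_mul_add_sq_eq_of_root {c e g x : ℝ} (hcg : c * (32 * g + 8 * e) = 1)
    (hx : x ^ 2 - 2 * g * x + e ^ 2 / 16 = 0) : c * (4 * x + e) ^ 2 = x := by
  linear_combination 16 * c * hx + x * hcg

lemma le_of_iterate_four_mul_add_sq {c e y : ℝ} (hc : 0 ≤ c) (he : 0 ≤ e)
    (hy : c * (4 * y + e) ^ 2 ≤ y) (x : ℕ → ℝ) (h0 : x 0 = 0)
    (hx : ∀ k, x (k + 1) = c * (4 * x k + e) ^ 2) (k : ℕ) : x k ≤ y := by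
  have hy0 : 0 ≤ y := le_trans (by positivity) hy
  suffices 0 ≤ x k ∧ x k ≤ y from this.2
  induction k with
  | zero => exact ⟨h0.ge, h0 ▸ hy0⟩
  | succ k ih =>
    refine ⟨hx k ▸ by positivity, ?_⟩
    calc x (k + 1) = c * (4 * x k + e) ^ 2 := hx k
      _ ≤ c * (4 * y + e) ^ 2 := by gcongr <;> linarith [ih.1, ih.2]
      _ ≤ y := hy

lemma eq_three_mul_add_of_coupled {c e : ℝ} (α β : ℕ → ℝ) (hα0 : α 0 = e) (hβ0 : β 0 = 0)
    (hα : ∀ k, α (k + 1) = 3 * c * (α k + β k) ^ 2 + e)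
    (hβ : ∀ k, β (k + 1) = c * (α k + β k) ^ 2) : ∀ k, α k = 3 * β k + e
  | 0 => by rw [hα0, hβ0]; ring
  | k + 1 => by rw [hα, hβ]; ring

theorem iterates_bounded_by_fixed_point
    (a b M ξ c₀ g αbar βbar : ℝ) (ha : 0 < a) (hb : 0 < b) (hM : 0 < M) (hξ : 0 < ξ)
    (hξle : ξ ≤ 3 * b / (16 * a ^ 2 * M))
    (hc₀ : c₀ = a * M / (3 * b))
    (hg : g = 3 * b / (32 * a * M) - a / 4 * ξ)
    (hαbar : αbar = 3 * a ^ 2 * ξ ^ 2 / 16 / (g + Real.sqrt (g ^ 2 - a ^ 2 / 16 * ξ ^ 2)) + a * ξ)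
    (hβbar : βbar = a ^ 2 * ξ ^ 2 / 16 / (g + Real.sqrt (g ^ 2 - a ^ 2 / 16 * ξ ^ 2)))
    (α β : ℕ → ℝ) (hα0 : α 0 = a * ξ) (hβ0 : β 0 = 0)
    (hα : ∀ k, α (k + 1) = 3 * c₀ * (α k + β k) ^ 2 + a * ξ)
    (hβ : ∀ k, β (k + 1) = c₀ * (α k + β k) ^ 2) :
    ∀ k, α k ≤ αbar ∧ β k ≤ βbar := by
  have hc₀g : c₀ * (32 * g + 8 * (a * ξ)) = 1 := by
    rw [hc₀, hg]; field_simp; ring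
  have hξg : a / 4 * ξ ≤ g := by
    have : a * ξ ≤ 3 * b / (16 * a * M) := by
      calc a * ξ ≤ a * (3 * b / (16 * a ^ 2 * M)) := by gcongr
        _ = 3 * b / (16 * a * M) := by field_simp
    rw [hg]; linarith [show 3 * b / (32 * a * M) = 3 * b / (16 * a * M) / 2 by ring]
  have hgpos : 0 < g := lt_of_lt_of_le (by positivity) hξg
  have hqg : a ^ 2 / 16 * ξ ^ 2 ≤ g ^ 2 := by nlinarith [mul_le_mul hξg hξg (by positivity) hgpos.le]
  have hβbar' : βbar = smallRoot g (a ^ 2 / 16 * ξ ^ 2) := by rw [hβbar, smallRoot]; ring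
  have hroot := smallRoot_sq_sub_two_mul_add hgpos hqg
  rw [← hβbar'] at hroot
  have hfix : c₀ * (4 * βbar + a * ξ) ^ 2 = βbar :=
    mul_four_mul_add_sq_eq_of_root hc₀g (by linear_combination hroot)
  have hαβ := eq_three_mul_add_of_coupled α β hα0 hβ0 hα hβ
  have hβle := le_of_iterate_four_mul_add_sq (by rw [hc₀]; positivity) (by positivity) hfix.le β
    hβ0 fun k => by rw [hβ, hαβ]; ring_nf
  have hαbar' : αbar = 3 * βbar + a * ξ := by rw [hαbar, hβbar]; ring
  exact fun k => ⟨by linarith [hαβ k, hβle k], hβle k⟩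
end

section
/- Let a, b, M > 0, ξ ∈ ℝ^d with |ξ| ≤ 3b/(16a²M), and let B be a d×d matrix with ‖e^{Bt}‖ ≤ a e^{-bt} for t ≥ 0. Suppose x_k, y_k : [0,∞) → ℝ^d are continuous with |x_k(t)| ≤ ᾱ e^{-bt} and |y_k(t)| ≤ β̄ e^{-2bt}, where ᾱ + β̄ ≤ (3/8)·b/(aM), and suppose n_s satisfies |n_s(x,y)| ≤ M(|x|+|y|)² (taking n_s(0,0)=0 and the quadratic Lipschitz bound). Define x_{k+1}(t) = e^{Bt}ξ + ∫_0^t e^{B(t-s)} n_s(x_k(s), y_k(s)) ds. Then |x_{k+1}(t)| ≤ [ (aM/b)(ᾱ+β̄)² + a|ξ| ] e^{-bt} for all t ≥ 0. -/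
/-!
Bound the two terms of the variation-of-constants formula separately. The free term is at most
`a ‖ξ‖ e^{-bt}`. Since `‖x_k(s)‖ + ‖y_k(s)‖ ≤ (ᾱ + β̄) e^{-bs}`, the forcing `n_s(x_k, y_k)` decays
like `e^{-2bs}`, so the integrand is at most `a M (ᾱ + β̄)² e^{-bt} e^{-bs}`, and `∫₀^∞ e^{-bs} ds = 1/b`.
-/

open Matrix Real Set

lemma integral_exp_neg_mul_le {b t : ℝ} (hb : 0 < b) :
    ∫ s in (0 : ℝ)..t, exp (-b * s) ≤ 1 / b := by
  have hI : ∫ s in (0 : ℝ)..t, exp (-b * s) = (1 - exp (-b * t)) / b := by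
    rw [intervalIntegral.integral_comp_mul_left exp (neg_ne_zero.2 hb.ne'), integral_exp,
      mul_zero, exp_zero, smul_eq_mul, inv_neg]
    field_simp
    ring
  rw [hI]
  gcongr
  linarith [exp_pos (-b * t)]

lemma norm_intervalIntegral_le_of_norm_le_mul_exp {E : Type*} [NormedAddCommGroup E]
    [NormedSpace ℝ E] {f : ℝ → E} {b C t : ℝ} (hb : 0 < b) (hC : 0 ≤ C) (ht : 0 ≤ t)
    (hf : ∀ s ∈ Ioc 0 t, ‖f s‖ ≤ C * exp (-b * s)) :
    ‖∫ s in (0 : ℝ)..t, f s‖ ≤ C / b := by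
  have hbound : ∀ᵐ s ∂MeasureTheory.volume.restrict (uIoc 0 t), ‖f s‖ ≤ C * exp (-b * s) :=
    MeasureTheory.ae_restrict_of_forall_mem measurableSet_uIoc (by rwa [uIoc_of_le ht])
  have hint : IntervalIntegrable (fun s => C * exp (-b * s)) MeasureTheory.volume 0 t :=
    (continuous_const.mul (continuous_exp.comp (continuous_const.mul continuous_id))).intervalIntegrable
      0 t
  calc ‖∫ s in (0 : ℝ)..t, f s‖
      ≤ |∫ s in (0 : ℝ)..t, C * exp (-b * s)| :=
        intervalIntegral.norm_integral_le_abs_of_norm_le hbound hint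
    _ = C * ∫ s in (0 : ℝ)..t, exp (-b * s) := by
        rw [intervalIntegral.integral_const_mul, abs_of_nonneg]
        exact mul_nonneg hC (intervalIntegral.integral_nonneg ht fun s _ => (exp_pos _).le)
    _ ≤ C * (1 / b) := mul_le_mul_of_nonneg_left (integral_exp_neg_mul_le hb) hC
    _ = C / b := mul_one_div C b

lemma add_le_mul_exp_of_le_exp_neg_two_mul {u v α β b s : ℝ} (hβ : 0 ≤ β) (hbs : 0 ≤ b * s)
    (hu : u ≤ α * exp (-b * s)) (hv : v ≤ β * exp (-2 * b * s)) :
    u + v ≤ (α + β) * exp (-b * s) := by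
  have hexp : exp (-2 * b * s) ≤ exp (-b * s) := exp_le_exp.2 (by linarith)
  nlinarith [mul_le_mul_of_nonneg_left hexp hβ]

lemma norm_variationOfConstants_le {E : Type*} [NormedAddCommGroup E] [NormedSpace ℝ E]
    {S : ℝ → E →L[ℝ] E} {g : ℝ → E} {a b K t : ℝ} (ha : 0 ≤ a) (hb : 0 < b) (hK : 0 ≤ K)
    (ht : 0 ≤ t) (hS : ∀ t, 0 ≤ t → ‖S t‖ ≤ a * exp (-b * t))
    (hg : ∀ s, 0 ≤ s → ‖g s‖ ≤ K * exp (-2 * b * s)) (ξ : E) :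
    ‖S t ξ + ∫ s in (0 : ℝ)..t, S (t - s) (g s)‖ ≤ (a * K / b + a * ‖ξ‖) * exp (-b * t) := by
  have hfree : ‖S t ξ‖ ≤ a * exp (-b * t) * ‖ξ‖ :=
    (S t).le_of_opNorm_le (hS t ht) ξ
  have hintegrand : ∀ s ∈ Ioc 0 t,
      ‖S (t - s) (g s)‖ ≤ a * K * exp (-b * t) * exp (-b * s) := by
    rintro s ⟨hs0, hst⟩
    calc ‖S (t - s) (g s)‖
        ≤ a * exp (-b * (t - s)) * (K * exp (-2 * b * s)) :=
          (S (t - s)).le_of_opNorm_le (hS _ (by linarith)) _ |>.trans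
            (mul_le_mul_of_nonneg_left (hg s hs0.le) (by positivity))
      _ = a * K * exp (-b * t) * exp (-b * s) := by
          have hexp : exp (-b * (t - s)) * exp (-2 * b * s) = exp (-b * t) * exp (-b * s) := by
            rw [← exp_add, ← exp_add]
            ring_nf
          linear_combination a * K * hexp
  have hforced := norm_intervalIntegral_le_of_norm_le_mul_exp hb (by positivity) ht hintegrand
  calc ‖S t ξ + ∫ s in (0 : ℝ)..t, S (t - s) (g s)‖
      ≤ a * exp (-b * t) * ‖ξ‖ + a * K * exp (-b * t) / b :=
        (norm_add_le _ _).trans (add_le_add hfree hforced)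
    _ = (a * K / b + a * ‖ξ‖) * exp (-b * t) := by ring

theorem stable_iterate_x_bound_general
    (d : ℕ) (a b M αbar βbar : ℝ) (ha : 0 < a) (hb : 0 < b) (hM : 0 < M)
    (ξ : EuclideanSpace ℝ (Fin d))
    (B : Matrix (Fin d) (Fin d) ℝ)
    (hBnorm : ∀ t : ℝ, 0 ≤ t →
      ‖(Matrix.toEuclideanCLM (𝕜 := ℝ) (NormedSpace.exp (t • B)) :
          EuclideanSpace ℝ (Fin d) →L[ℝ] EuclideanSpace ℝ (Fin d))‖ ≤ a * Real.exp (-b * t))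
    (xk yk : ℝ → EuclideanSpace ℝ (Fin d))
    (hxk : ∀ t : ℝ, 0 ≤ t → ‖xk t‖ ≤ αbar * Real.exp (-b * t))
    (hyk : ∀ t : ℝ, 0 ≤ t → ‖yk t‖ ≤ βbar * Real.exp (-2 * b * t))
    (hαβ : 0 ≤ αbar ∧ 0 ≤ βbar ∧ αbar + βbar ≤ 3 / 8 * (b / (a * M)))
    (ns : EuclideanSpace ℝ (Fin d) → EuclideanSpace ℝ (Fin d) → EuclideanSpace ℝ (Fin d))
    (hns : ∀ x y, ‖ns x y‖ ≤ M * (‖x‖ + ‖y‖) ^ 2)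
    (xk1 : ℝ → EuclideanSpace ℝ (Fin d))
    (hxk1 : ∀ t : ℝ, xk1 t =
      Matrix.toEuclideanCLM (𝕜 := ℝ) (NormedSpace.exp (t • B)) ξ +
        ∫ s in (0 : ℝ)..t,
          Matrix.toEuclideanCLM (𝕜 := ℝ) (NormedSpace.exp ((t - s) • B))
            (ns (xk s) (yk s))) :
    ∀ t : ℝ, 0 ≤ t →
      ‖xk1 t‖ ≤ (a * M / b * (αbar + βbar) ^ 2 + a * ‖ξ‖) * Real.exp (-b * t) := by
  obtain ⟨-, hβ, -⟩ := hαβ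
  have hforcing : ∀ s, 0 ≤ s →
      ‖ns (xk s) (yk s)‖ ≤ M * (αbar + βbar) ^ 2 * exp (-2 * b * s) := by
    intro s hs
    have hsum : ‖xk s‖ + ‖yk s‖ ≤ (αbar + βbar) * exp (-b * s) :=
      add_le_mul_exp_of_le_exp_neg_two_mul hβ (by positivity) (hxk s hs) (hyk s hs)
    calc ‖ns (xk s) (yk s)‖
        ≤ M * ((αbar + βbar) * exp (-b * s)) ^ 2 :=
          (hns _ _).trans (by gcongr)
      _ = M * (αbar + βbar) ^ 2 * exp (-2 * b * s) := by
          rw [mul_pow, ← exp_nat_mul]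
          ring_nf
  intro t ht
  rw [hxk1 t]
  exact (norm_variationOfConstants_le ha.le hb (by positivity) ht hBnorm hforcing ξ).trans_eq
    (by ring)

theorem stable_iterate_x_bound
    (d : ℕ) (a b M αbar βbar : ℝ) (ha : 0 < a) (hb : 0 < b) (hM : 0 < M)
    (ξ : EuclideanSpace ℝ (Fin d)) (hξ : ‖ξ‖ ≤ 3 * b / (16 * a ^ 2 * M))
    (B : Matrix (Fin d) (Fin d) ℝ)
    (hBnorm : ∀ t : ℝ, 0 ≤ t →
      ‖(Matrix.toEuclideanCLM (𝕜 := ℝ) (NormedSpace.exp (t • B)) :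
          EuclideanSpace ℝ (Fin d) →L[ℝ] EuclideanSpace ℝ (Fin d))‖ ≤ a * Real.exp (-b * t))
    (xk yk : ℝ → EuclideanSpace ℝ (Fin d))
    (hxkc : Continuous xk) (hykc : Continuous yk)
    (hxk : ∀ t : ℝ, 0 ≤ t → ‖xk t‖ ≤ αbar * Real.exp (-b * t))
    (hyk : ∀ t : ℝ, 0 ≤ t → ‖yk t‖ ≤ βbar * Real.exp (-2 * b * t))
    (hαβ : 0 ≤ αbar ∧ 0 ≤ βbar ∧ αbar + βbar ≤ 3 / 8 * (b / (a * M)))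
    (ns : EuclideanSpace ℝ (Fin d) → EuclideanSpace ℝ (Fin d) → EuclideanSpace ℝ (Fin d))
    (hns : ∀ x y, ‖ns x y‖ ≤ M * (‖x‖ + ‖y‖) ^ 2)
    (xk1 : ℝ → EuclideanSpace ℝ (Fin d))
    (hxk1 : ∀ t : ℝ, xk1 t =
      Matrix.toEuclideanCLM (𝕜 := ℝ) (NormedSpace.exp (t • B)) ξ +
        ∫ s in (0 : ℝ)..t,
          Matrix.toEuclideanCLM (𝕜 := ℝ) (NormedSpace.exp ((t - s) • B))
            (ns (xk s) (yk s))) :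
    ∀ t : ℝ, 0 ≤ t →
      ‖xk1 t‖ ≤ (a * M / b * (αbar + βbar) ^ 2 + a * ‖ξ‖) * Real.exp (-b * t) :=
  stable_iterate_x_bound_general d a b M αbar βbar ha hb hM ξ B hBnorm xk yk hxk hyk hαβ ns hns xk1
    hxk1
end
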